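/- arXiv:quant-ph/0510187 — 3 statements merged into one kernel-verified Lean document; each statement's English description precedes it below -/
import Mathlib

section
/- Let H be a finite-dimensional complex Hilbert space and X a permutationally invariant operator on H^{⊗N} (i.e., Π_σ X Π_σ† = X for every permutation σ of the N tensor factors). If Tr[X ρ^{⊗N}] = 0 for every density operator ρ on H, then X = 0. -/
open Matrix BigOperators Finset
open scoped ComplexOrder

/-- N-fold tensor power of a matrix (operator on H^{⊗N} with H = ℂ^d). -/
def tensorPow {d N : ℕ} (ρ : Matrix (Fin d) (Fin d) ℂ) :
    Matrix (Fin N → Fin d) (Fin N → Fin d) ℂ :=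
  Matrix.of fun f g => ∏ i, ρ (f i) (g i)

/-- Conjugation Π_σ X Π_σ† of an operator on H^{⊗N} by the unitary permuting tensor factors. -/
def permAction {d N : ℕ} (σ : Equiv.Perm (Fin N))
    (X : Matrix (Fin N → Fin d) (Fin N → Fin d) ℂ) :
    Matrix (Fin N → Fin d) (Fin N → Fin d) ℂ :=
  Matrix.of fun f g => X (f ∘ σ) (g ∘ σ)

/-- Density operator: positive semidefinite with unit trace. -/
def IsDensity {d : ℕ} (ρ : Matrix (Fin d) (Fin d) ℂ) : Prop :=
  ρ.PosSemidef ∧ ρ.trace = 1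

/-- A^{(k)} = I^{⊗(k-1)} ⊗ A ⊗ I^{⊗(N-k)}, the observable A acting on the k-th factor. -/
noncomputable def siteOp {d N : ℕ} (k : Fin N) (A : Matrix (Fin d) (Fin d) ℂ) :
    Matrix (Fin N → Fin d) (Fin N → Fin d) ℂ :=
  Matrix.of fun f g => A (f k) (g k) * ∏ i ∈ Finset.univ.erase k, (if f i = g i then (1 : ℂ) else 0)

/-- Matrix element ⟨ψ₁|⊗⋯⊗⟨ψ_N| X |φ₁⟩⊗⋯⊗|φ_N⟩ on product vectors. -/
noncomputable def prodElem {d N : ℕ} (X : Matrix (Fin N → Fin d) (Fin N → Fin d) ℂ)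
    (ψ φ : Fin N → Fin d → ℂ) : ℂ :=
  ∑ f : Fin N → Fin d, ∑ g : Fin N → Fin d,
    (starRingEnd ℂ) (∏ i, ψ i (f i)) * X f g * ∏ i, φ i (g i)

/-!
The functional `F(ρ₁, …, ρ_N) = Tr[X (ρ₁ ⊗ ⋯ ⊗ ρ_N)]` is multilinear, and it is symmetric because
`X` is permutation invariant. By homogeneity the hypothesis makes `F(ρ, …, ρ)` vanish for every
positive semidefinite `ρ`. Inclusion–exclusion over the slots (polarization) writes
`∑_σ F(ρ_{σ 1}, …, ρ_{σ N})` as a signed sum of such diagonal values of partial sums of the `ρ_j`,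
so symmetry gives `N! F(ρ₁, …, ρ_N) = 0` whenever all `ρ_j` are positive semidefinite. These span
all matrices, hence `F = 0`, and evaluating `F` on matrix units recovers the entries of `X`.
-/

theorem Finset.sum_neg_one_pow_card_of_forall_notMem_range {α ι : Type*} [Fintype α] [Fintype ι]
    [DecidableEq ι] (r : α → ι) :
    ∑ s : Finset ι, (if ∀ a, r a ∉ s then (-1 : ℤ) ^ #s else 0) =
      if Function.Surjective r then 1 else 0 := by
  have hfilter : univ.filter (fun s : Finset ι => ∀ a, r a ∉ s) = (univ.image r)ᶜ.powerset := by
    ext s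
    simp only [mem_filter, mem_univ, true_and, mem_powerset, subset_iff, mem_compl, mem_image,
      not_exists]
    grind
  have hsurj : (univ.image r)ᶜ = ∅ ↔ Function.Surjective r := by
    simp [compl_eq_empty_iff, Finset.eq_univ_iff_forall, Function.Surjective]
  rw [← Finset.sum_filter, hfilter, Finset.sum_powerset_neg_one_pow_card]
  exact if_congr hsurj rfl rfl

theorem Equiv.Perm.sum_eq_sum_surjective {ι β : Type*} [Fintype ι] [DecidableEq ι]
    [AddCommMonoid β] (F : (ι → ι) → β) :
    ∑ σ : Equiv.Perm ι, F σ = ∑ r : ι → ι, if Function.Surjective r then F r else 0 := by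
  have : univ.filter (fun r : ι → ι => Function.Surjective r) =
      univ.map ⟨_, Equiv.coe_fn_injective (α := ι) (β := ι)⟩ := by
    ext r
    simp only [mem_filter, mem_univ, true_and, mem_map, Function.Embedding.coeFn_mk]
    refine ⟨fun h => ⟨Equiv.ofBijective r ⟨Finite.injective_iff_surjective.mpr h, h⟩, rfl⟩, ?_⟩
    rintro ⟨σ, rfl⟩
    exact σ.surjective
  rw [← Finset.sum_filter, this, Finset.sum_map]
  rfl

theorem MultilinearMap.sum_comp_perm_eq_sum_neg_one_pow_smul {R ι M N : Type*} [CommSemiring R]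
    [AddCommMonoid M] [Module R M] [AddCommGroup N] [Module R N] [Fintype ι] [DecidableEq ι]
    (f : MultilinearMap R (fun _ : ι => M) N) (m : ι → M) :
    ∑ σ : Equiv.Perm ι, f (m ∘ σ) =
      ∑ s : Finset ι, (-1 : ℤ) ^ #s • f (fun _ => ∑ j ∈ sᶜ, m j) := by
  have hexpand : ∀ s : Finset ι, f (fun _ => ∑ j ∈ sᶜ, m j) =
      ∑ r : ι → ι, if ∀ i, r i ∉ s then f (m ∘ r) else 0 := by
    intro s
    rw [f.map_sum_finset, ← Finset.sum_filter]
    congr 1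
    ext r
    simp [Fintype.mem_piFinset]
  simp_rw [hexpand, Finset.smul_sum]
  rw [Finset.sum_comm, Equiv.Perm.sum_eq_sum_surjective (fun r => f (m ∘ r))]
  refine Finset.sum_congr rfl fun r _ => ?_
  simp_rw [smul_ite, smul_zero, ← ite_zero_smul, ← Finset.sum_smul,
    Finset.sum_neg_one_pow_card_of_forall_notMem_range, ite_zero_smul, one_smul]

theorem MultilinearMap.map_eq_zero_of_forall_map_const_sum_eq_zero {R ι M N : Type*}
    [CommSemiring R] [AddCommMonoid M] [Module R M] [AddCommGroup N] [Module R N]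
    [IsAddTorsionFree N] [Fintype ι] [DecidableEq ι]
    (f : MultilinearMap R (fun _ : ι => M) N) {m : ι → M}
    (hsymm : ∀ σ : Equiv.Perm ι, f (m ∘ σ) = f m)
    (hconst : ∀ s : Finset ι, f (fun _ => ∑ j ∈ s, m j) = 0) : f m = 0 := by
  have hpolar := f.sum_comp_perm_eq_sum_neg_one_pow_smul m
  simp only [hsymm, hconst, smul_zero, Finset.sum_const_zero, Finset.sum_const,
    Finset.card_univ] at hpolar
  exact (nsmul_eq_zero_iff_right Fintype.card_ne_zero).mp hpolar

open scoped Matrix.Norms.L2Operator MatrixOrder in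
theorem Matrix.span_posSemidef (n : Type*) [Fintype n] [DecidableEq n] :
    Submodule.span ℂ {A : Matrix n n ℂ | A.PosSemidef} = ⊤ := by
  simpa only [Matrix.nonneg_iff_posSemidef] using CStarAlgebra.span_nonneg (A := Matrix n n ℂ)

theorem MultilinearMap.eq_zero_of_forall_mem_of_span_eq_top {K ι V W : Type*} [Field K]
    [Finite ι] [AddCommGroup V] [Module K V] [AddCommMonoid W] [Module K W] {s : Set V}
    (hs : Submodule.span K s = ⊤) (f : MultilinearMap K (fun _ : ι => V) W)
    (hf : ∀ v : ι → V, (∀ i, v i ∈ s) → f v = 0) : f = 0 :=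
  Module.Basis.ext_multilinear (fun _ => Module.Basis.ofSpan hs.ge) fun v =>
    hf _ fun i => Module.Basis.ofSpan_subset hs.ge ⟨v i, rfl⟩

section TensorTraceForm

variable {ι n R : Type*} [Fintype ι] [DecidableEq ι] [Fintype n] [CommSemiring R]

/-- `ρ ↦ Tr[X (ρ₁ ⊗ ⋯ ⊗ ρ_N)]`, multilinear in the factors. -/
noncomputable def tensorTraceForm (X : Matrix (ι → n) (ι → n) R) :
    MultilinearMap R (fun _ : ι => Matrix n n R) R :=
  ∑ f, ∑ g, X f g •
    (MultilinearMap.mkPiAlgebra R ι R).compLinearMap fun i => Matrix.entryLinearMap R R (g i) (f i)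

theorem tensorTraceForm_apply (X : Matrix (ι → n) (ι → n) R) (ρ : ι → Matrix n n R) :
    tensorTraceForm X ρ = ∑ f, ∑ g, X f g * ∏ i, ρ i (g i) (f i) := by
  simp [tensorTraceForm]

theorem tensorTraceForm_single [DecidableEq n] (X : Matrix (ι → n) (ι → n) R) (f g : ι → n) :
    tensorTraceForm X (fun i => Matrix.single (g i) (f i) 1) = X f g := by
  simp only [tensorTraceForm_apply, Matrix.single_apply, Fintype.prod_boole]
  simp [forall_and, ← funext_iff, ite_and]

end TensorTraceForm

theorem trace_mul_tensorPow {d N : ℕ} (X : Matrix (Fin N → Fin d) (Fin N → Fin d) ℂ)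
    (ρ : Matrix (Fin d) (Fin d) ℂ) :
    (X * tensorPow ρ).trace = tensorTraceForm X (fun _ => ρ) := by
  simp [Matrix.trace, Matrix.mul_apply, tensorPow, tensorTraceForm_apply]

theorem tensorTraceForm_comp_perm {d N : ℕ} {X : Matrix (Fin N → Fin d) (Fin N → Fin d) ℂ}
    (hinv : ∀ σ : Equiv.Perm (Fin N), permAction σ X = X) (σ : Equiv.Perm (Fin N))
    (ρ : Fin N → Matrix (Fin d) (Fin d) ℂ) :
    tensorTraceForm X (ρ ∘ σ) = tensorTraceForm X ρ := by
  have hX : ∀ f g, X (f ∘ σ) (g ∘ σ) = X f g := fun f g => congrFun (congrFun (hinv σ) f) g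
  let e := σ.symm.arrowCongr (Equiv.refl (Fin d))
  simp only [tensorTraceForm_apply]
  refine (Fintype.sum_equiv e _ _ fun f => Fintype.sum_equiv e _ _ fun g => ?_).symm
  change X f g * _ = X (f ∘ σ) (g ∘ σ) * ∏ i, ρ (σ i) (g (σ i)) (f (σ i))
  rw [hX, Equiv.prod_comp σ fun i => ρ i (g i) (f i)]

theorem MultilinearMap.map_const_eq_zero_of_posSemidef {d : ℕ} {ι W : Type*} [Fintype ι]
    [Nonempty ι] [AddCommMonoid W] [Module ℂ W]
    (F : MultilinearMap ℂ (fun _ : ι => Matrix (Fin d) (Fin d) ℂ) W)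
    (h : ∀ ρ, IsDensity ρ → F (fun _ => ρ) = 0) {ρ : Matrix (Fin d) (Fin d) ℂ}
    (hρ : ρ.PosSemidef) : F (fun _ => ρ) = 0 := by
  obtain rfl | hρ0 := eq_or_ne ρ 0
  · exact F.map_zero
  have htr : ρ.trace ≠ 0 := (hρ.trace_eq_zero_iff).not.mpr hρ0
  have hdens : IsDensity (ρ.trace⁻¹ • ρ) :=
    ⟨hρ.smul (inv_nonneg.mpr hρ.trace_nonneg),
      by rw [Matrix.trace_smul, smul_eq_mul, inv_mul_cancel₀ htr]⟩
  have hscale := F.map_smul_univ (fun _ => ρ.trace) (fun _ => ρ.trace⁻¹ • ρ)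
  simpa only [smul_inv_smul₀ htr, h _ hdens, smul_zero] using hscale

/-- A permutationally invariant operator on H^{⊗N} with vanishing
ensemble averages Tr[X ρ^{⊗N}] on all density operators ρ is zero. -/
theorem perm_invariant_determined_by_averages
    {d N : ℕ} (hN : 0 < N)
    (X : Matrix (Fin N → Fin d) (Fin N → Fin d) ℂ)
    (hinv : ∀ σ : Equiv.Perm (Fin N), permAction σ X = X)
    (h : ∀ ρ : Matrix (Fin d) (Fin d) ℂ, IsDensity ρ → (X * tensorPow ρ).trace = 0) :
    X = 0 := by
  have : Nonempty (Fin N) := ⟨⟨0, hN⟩⟩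
  have hconst : ∀ ρ : Matrix (Fin d) (Fin d) ℂ, ρ.PosSemidef → tensorTraceForm X (fun _ => ρ) = 0 :=
    fun ρ => (tensorTraceForm X).map_const_eq_zero_of_posSemidef fun ρ hρ => by
      rw [← trace_mul_tensorPow]; exact h ρ hρ
  have hpsd : ∀ ρ : Fin N → Matrix (Fin d) (Fin d) ℂ, (∀ i, (ρ i).PosSemidef) →
      tensorTraceForm X ρ = 0 := fun ρ hρ =>
    (tensorTraceForm X).map_eq_zero_of_forall_map_const_sum_eq_zero
      (tensorTraceForm_comp_perm hinv · ρ)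
      fun s => hconst _ (Matrix.posSemidef_sum s fun j _ => hρ j)
  have hF : tensorTraceForm X = 0 :=
    (tensorTraceForm X).eq_zero_of_forall_mem_of_span_eq_top (Matrix.span_posSemidef _) hpsd
  refine Matrix.ext fun f g => ?_
  rw [Matrix.zero_apply, ← tensorTraceForm_single X f g, hF]
  rfl
end

section
/- Let X be a permutationally invariant operator on H^{⊗N}. If the diagonal matrix elements ⟨ψ_1|⊗⋯⊗⟨ψ_N| X |ψ_1⟩⊗⋯⊗|ψ_N⟩ vanish for all choices of unit vectors ψ_1, …, ψ_N ∈ H, then X = 0. -/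
open Matrix BigOperators Finset
open scoped ComplexOrder

section PolarizationAux
variable {d N : ℕ}

lemma prod_update (ψ : Fin N → Fin d → ℂ) (j : Fin N) (x : Fin d → ℂ) (f : Fin N → Fin d) :
    ∏ i, Function.update ψ j x i (f i)
      = x (f j) * ∏ i ∈ Finset.univ.erase j, ψ i (f i) := by
  rw [← Finset.mul_prod_erase Finset.univ _ (Finset.mem_univ j), Function.update_self]
  congr 1
  exact Finset.prod_congr rfl fun i hi => by
    rw [Function.update_of_ne (Finset.ne_of_mem_erase hi)]

lemma prodElem_update_left_add (X : Matrix (Fin N → Fin d) (Fin N → Fin d) ℂ)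
    (ψ φ : Fin N → Fin d → ℂ) (j : Fin N) (x y : Fin d → ℂ) :
    prodElem X (Function.update ψ j (x + y)) φ
      = prodElem X (Function.update ψ j x) φ + prodElem X (Function.update ψ j y) φ := by
  unfold prodElem
  rw [← Finset.sum_add_distrib]
  refine Finset.sum_congr rfl fun f _ => ?_
  rw [← Finset.sum_add_distrib]
  refine Finset.sum_congr rfl fun g _ => ?_
  simp only [prod_update, Pi.add_apply, map_add, _root_.map_mul]
  ring

lemma prodElem_update_left_smul (X : Matrix (Fin N → Fin d) (Fin N → Fin d) ℂ)
    (ψ φ : Fin N → Fin d → ℂ) (j : Fin N) (c : ℂ) (x : Fin d → ℂ) :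
    prodElem X (Function.update ψ j (c • x)) φ
      = (starRingEnd ℂ) c * prodElem X (Function.update ψ j x) φ := by
  unfold prodElem
  rw [Finset.mul_sum]
  refine Finset.sum_congr rfl fun f _ => ?_
  rw [Finset.mul_sum]
  refine Finset.sum_congr rfl fun g _ => ?_
  simp only [prod_update, Pi.smul_apply, smul_eq_mul, _root_.map_mul]
  ring

lemma prodElem_update_right_add (X : Matrix (Fin N → Fin d) (Fin N → Fin d) ℂ)
    (ψ φ : Fin N → Fin d → ℂ) (j : Fin N) (x y : Fin d → ℂ) :
    prodElem X ψ (Function.update φ j (x + y))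
      = prodElem X ψ (Function.update φ j x) + prodElem X ψ (Function.update φ j y) := by
  unfold prodElem
  rw [← Finset.sum_add_distrib]
  refine Finset.sum_congr rfl fun f _ => ?_
  rw [← Finset.sum_add_distrib]
  refine Finset.sum_congr rfl fun g _ => ?_
  simp only [prod_update, Pi.add_apply]
  ring

lemma prodElem_update_right_smul (X : Matrix (Fin N → Fin d) (Fin N → Fin d) ℂ)
    (ψ φ : Fin N → Fin d → ℂ) (j : Fin N) (c : ℂ) (x : Fin d → ℂ) :
    prodElem X ψ (Function.update φ j (c • x))
      = c * prodElem X ψ (Function.update φ j x) := by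
  unfold prodElem
  rw [Finset.mul_sum]
  refine Finset.sum_congr rfl fun f _ => ?_
  rw [Finset.mul_sum]
  refine Finset.sum_congr rfl fun g _ => ?_
  simp only [prod_update, Pi.smul_apply, smul_eq_mul]
  ring

lemma prodElem_smul (X : Matrix (Fin N → Fin d) (Fin N → Fin d) ℂ)
    (ψ φ : Fin N → Fin d → ℂ) (c : Fin N → ℂ) :
    prodElem X (fun i => c i • ψ i) (fun i => c i • φ i)
      = (∏ i, (starRingEnd ℂ) (c i) * c i) * prodElem X ψ φ := by
  unfold prodElem
  rw [Finset.mul_sum]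
  refine Finset.sum_congr rfl fun f _ => ?_
  rw [Finset.mul_sum]
  refine Finset.sum_congr rfl fun g _ => ?_
  simp only [Pi.smul_apply, smul_eq_mul, Finset.prod_mul_distrib, _root_.map_mul, map_prod]
  ring

lemma polar {B : (Fin d → ℂ) → (Fin d → ℂ) → ℂ}
    (hadd1 : ∀ x y z, B (x + y) z = B x z + B y z)
    (hadd2 : ∀ x y z, B x (y + z) = B x y + B x z)
    (hs1 : ∀ (c : ℂ) x y, B (c • x) y = (starRingEnd ℂ) c * B x y)
    (hs2 : ∀ (c : ℂ) x y, B x (c • y) = c * B x y)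
    (hdiag : ∀ x, B x x = 0) (x y : Fin d → ℂ) : B x y = 0 := by
  have e1 : B x y + B y x = 0 := by
    have := hdiag (x + y)
    rw [hadd1, hadd2, hdiag, hadd2, hdiag] at this
    linear_combination this
  have e2 : B x y - B y x = 0 := by
    have h2 := hdiag (x + Complex.I • y)
    rw [hadd1, hadd2, hadd2, hdiag, hs1, hs2, hs1, hs2, hdiag] at h2
    have hI : (starRingEnd ℂ) Complex.I = -Complex.I := Complex.conj_I
    rw [hI] at h2
    have h3 : Complex.I * (B x y - B y x) = 0 := by linear_combination h2
    rcases mul_eq_zero.mp h3 with h4 | h4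
    · exact absurd h4 Complex.I_ne_zero
    · exact h4
  linear_combination e1 / 2 + e2 / 2


variable {d N : ℕ}

/-- If some slot is the zero vector, the product element vanishes. -/
lemma prodElem_zero_slot (X : Matrix (Fin N → Fin d) (Fin N → Fin d) ℂ)
    (ψ φ : Fin N → Fin d → ℂ) (i0 : Fin N) (h0 : φ i0 = 0) :
    prodElem X ψ φ = 0 := by
  unfold prodElem
  refine Finset.sum_eq_zero fun f _ => Finset.sum_eq_zero fun g _ => ?_
  have : ∏ i, φ i (g i) = 0 :=
    Finset.prod_eq_zero (Finset.mem_univ i0) (by rw [h0]; rfl)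
  rw [this, mul_zero]

/-- The diagonal vanishing extends from unit vectors to all vectors. -/
lemma diag_zero_all (X : Matrix (Fin N → Fin d) (Fin N → Fin d) ℂ)
    (h : ∀ ψ : Fin N → Fin d → ℂ, (∀ i, star (ψ i) ⬝ᵥ ψ i = 1) → prodElem X ψ ψ = 0)
    (ψ : Fin N → Fin d → ℂ) : prodElem X ψ ψ = 0 := by
  by_cases hz : ∀ i, ψ i ≠ 0
  · set s : Fin N → ℝ := fun i => ∑ a, Complex.normSq (ψ i a) with hs
    have hspos : ∀ i, 0 < s i := by
      intro i
      have hne : ∃ a, ψ i a ≠ 0 := by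
        by_contra hc
        push_neg at hc
        exact hz i (funext hc)
      obtain ⟨a, ha⟩ := hne
      refine Finset.sum_pos' (fun b _ => Complex.normSq_nonneg _) ⟨a, Finset.mem_univ a, ?_⟩
      exact (Complex.normSq_pos).mpr ha
    set c : Fin N → ℂ := fun i => ((Real.sqrt (s i))⁻¹ : ℝ) with hc
    have hdot : ∀ i, star (ψ i) ⬝ᵥ ψ i = (s i : ℂ) := by
      intro i
      simp only [dotProduct, Pi.star_apply, hs]
      push_cast
      refine Finset.sum_congr rfl fun a _ => ?_
      rw [Complex.star_def, Complex.normSq_eq_conj_mul_self]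
    have hcc : ∀ i, (starRingEnd ℂ) (c i) * c i = (s i : ℂ)⁻¹ := by
      intro i
      simp only [hc, Complex.conj_ofReal]
      rw [← Complex.ofReal_mul]
      rw [← Real.sqrt_inv, Real.mul_self_sqrt (inv_nonneg.mpr (hspos i).le)]
      push_cast
      ring
    have hunit : ∀ i, star ((fun i => c i • ψ i) i) ⬝ᵥ ((fun i => c i • ψ i) i) = 1 := by
      intro i
      simp only [star_smul, smul_dotProduct, dotProduct_smul, smul_eq_mul, hdot]
      rw [Complex.star_def, show c i * ((starRingEnd ℂ) (c i) * (s i : ℂ))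
        = ((starRingEnd ℂ) (c i) * c i) * (s i : ℂ) from by ring, hcc]
      exact inv_mul_cancel₀ (by exact_mod_cast (hspos i).ne')
    have h0 := h _ hunit
    rw [prodElem_smul] at h0
    have hne : (∏ i, (starRingEnd ℂ) (c i) * c i) ≠ 0 := by
      rw [Finset.prod_ne_zero_iff]
      intro i _
      rw [hcc i]
      exact inv_ne_zero (by exact_mod_cast (hspos i).ne')
    exact (mul_eq_zero.mp h0).resolve_left hne
  · push_neg at hz
    obtain ⟨i0, h0⟩ := hz
    exact prodElem_zero_slot X ψ ψ i0 h0

/-- Slot-by-slot polarization. -/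
lemma prodElem_zero (X : Matrix (Fin N → Fin d) (Fin N → Fin d) ℂ)
    (h : ∀ ψ : Fin N → Fin d → ℂ, (∀ i, star (ψ i) ⬝ᵥ ψ i = 1) → prodElem X ψ ψ = 0)
    (S : Finset (Fin N)) :
    ∀ ψ φ : Fin N → Fin d → ℂ, (∀ i ∉ S, ψ i = φ i) → prodElem X ψ φ = 0 := by
  induction S using Finset.induction_on with
  | empty =>
    intro ψ φ hag
    have : ψ = φ := funext fun i => hag i (Finset.notMem_empty i)
    rw [this]
    exact diag_zero_all X h φ
  | @insert j S hj IH =>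
    intro ψ φ hag
    set B : (Fin d → ℂ) → (Fin d → ℂ) → ℂ :=
      fun x y => prodElem X (Function.update ψ j x) (Function.update φ j y) with hB
    have hdiag : ∀ x, B x x = 0 := by
      intro x
      refine IH _ _ fun i hi => ?_
      by_cases hij : i = j
      · subst hij; simp
      · rw [Function.update_of_ne hij, Function.update_of_ne hij]
        exact hag i (by simp [hij, hi])
    have := polar (B := B)
      (fun x y z => prodElem_update_left_add X ψ _ j x y)
      (fun x y z => prodElem_update_right_add X _ φ j y z)
      (fun c x y => prodElem_update_left_smul X ψ _ j c x)
      (fun c x y => prodElem_update_right_smul X _ φ j c y)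
      hdiag (ψ j) (φ j)
    have this' : prodElem X (Function.update ψ j (ψ j)) (Function.update φ j (φ j)) = 0 := this
    rwa [Function.update_eq_self, Function.update_eq_self] at this'

lemma prodElem_single (X : Matrix (Fin N → Fin d) (Fin N → Fin d) ℂ) (f g : Fin N → Fin d) :
    prodElem X (fun i => Pi.single (f i) 1) (fun i => Pi.single (g i) 1) = X f g := by
  unfold prodElem
  have key : ∀ (u f' : Fin N → Fin d),
      (∏ i, (Pi.single (u i) (1:ℂ) : Fin d → ℂ) (f' i)) = if f' = u then (1:ℂ) else 0 := by
    intro u f'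
    simp only [Pi.single_apply]
    rw [Finset.prod_boole]
    congr 1
    simp [funext_iff]
  simp only [key]
  rw [Finset.sum_eq_single f]
  · rw [Finset.sum_eq_single g]
    · simp
    · intro b _ hb; simp [hb]
    · simp
  · intro b _ hb
    simp [hb]
  · simp

end PolarizationAux

/-- A permutationally invariant operator whose diagonal matrix elements on
all product unit vectors vanish is zero (factorized polarization identity). -/
theorem perm_invariant_eq_zero_of_diag_prod_vanish
    {d N : ℕ} (hN : 0 < N)
    (X : Matrix (Fin N → Fin d) (Fin N → Fin d) ℂ)
    (hinv : ∀ σ : Equiv.Perm (Fin N), permAction σ X = X)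
    (h : ∀ ψ : Fin N → Fin d → ℂ, (∀ i, star (ψ i) ⬝ᵥ ψ i = 1) → prodElem X ψ ψ = 0) :
    X = 0 := by
  ext f g
  have hall := prodElem_zero X h Finset.univ (fun i => Pi.single (f i) 1)
    (fun i => Pi.single (g i) 1) (fun i hi => absurd (Finset.mem_univ i) hi)
  rw [prodElem_single] at hall
  simpa using hall
end

section
/- The spectral measurement of Θ = (1/N)∑_{k=1}^N A^{(k)} on H^{⊗N} — i.e., the projection-valued measure given by the eigenprojections of Θ with outcomes the eigenvalues of Θ — is an unbiased estimator of Tr[Aρ] on states ρ^{⊗N}, and its variance equals (Tr[A²ρ] − (Tr[Aρ])²)/N for every density operator ρ. Hence it achieves the minimal variance among all unbiased POVM estimators on H^{⊗N}. -/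
open Matrix BigOperators Finset
open scoped ComplexOrder

/-! Write `Θ = (1/N) ∑ₖ A⁽ᵏ⁾ = ∑ᵢ rᵢ Pᵢ` and `τ = ρ^{⊗N}`. Since `Tr[A⁽ᵏ⁾ τ] = Tr[Aρ]` and
`Tr[A⁽ᵏ⁾ A⁽ˡ⁾ τ]` is `Tr[A²ρ]` for `k = l` and `Tr[Aρ]²` otherwise, the spectral measurement has
mean `Tr[Θτ] = Tr[Aρ]` and second moment `Tr[Θ²τ] = Tr[Aρ]² + (Tr[A²ρ] - Tr[Aρ]²)/N`.

For an unbiased POVM `(Qᵢ, sᵢ)` with `E = ∑ᵢ sᵢ Qᵢ`, the operator `E - Θ` annihilates every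
`σ^{⊗N}`. Differentiating `σ ↦ Tr[(E - Θ) σ^{⊗N}]` at `ρ` in the directions `Aρ` and `ρA` (which
is legitimate because positive matrices span all matrices) gives `Tr[(E - Θ) Θτ] = 0` and
`Tr[(E - Θ) τΘ] = 0`. Hence `∑ᵢ sᵢ² Tr[Qᵢτ] - Tr[Θ²τ] = Tr[∑ᵢ (sᵢ - Θ) Qᵢ (sᵢ - Θ) τ] ≥ 0`. -/

open Function

namespace Matrix

section PiKronecker

variable {ι n R : Type*} [Fintype ι] [CommSemiring R]

def piKronecker : MultilinearMap R (fun _ : ι => Matrix n n R) (Matrix (ι → n) (ι → n) R) where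
  toFun M := of fun f g => ∏ i, M i (f i) (g i)
  map_update_add' M k X Y := by
    ext f g
    simp only [of_apply, add_apply, apply_update (fun i (Mi : Matrix n n R) => Mi (f i) (g i)),
      Finset.prod_update_of_mem (Finset.mem_univ k), add_mul]
  map_update_smul' M k c X := by
    ext f g
    simp only [of_apply, smul_apply, apply_update (fun i (Mi : Matrix n n R) => Mi (f i) (g i)),
      Finset.prod_update_of_mem (Finset.mem_univ k), smul_eq_mul, mul_assoc]

theorem piKronecker_apply (M : ι → Matrix n n R) (f g : ι → n) :
    piKronecker M f g = ∏ i, M i (f i) (g i) := rfl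

theorem conjTranspose_piKronecker [StarRing R] (M : ι → Matrix n n R) :
    (piKronecker M)ᴴ = piKronecker fun i => (M i)ᴴ := by
  ext f g
  simp [piKronecker_apply, conjTranspose_apply]

theorem piKronecker_const_smul_add [DecidableEq ι] (t : R) (C ρ : Matrix n n R) :
    piKronecker (fun _ : ι => t • C + ρ) =
      ∑ S : Finset ι, t ^ S.card • piKronecker (S.piecewise (fun _ => C) fun _ => ρ) := by
  rw [show (fun _ : ι => t • C + ρ) = (fun _ => t • C) + fun _ => ρ from rfl,
    MultilinearMap.map_add_univ]
  refine Finset.sum_congr rfl fun S _ => ?_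
  set m := S.piecewise (fun _ => C) fun _ => ρ
  have hm : S.piecewise (fun _ => t • C) (fun _ => ρ) = S.piecewise (fun i => t • m i) m := by
    ext1 i
    by_cases hi : i ∈ S <;> simp [m, hi]
  rw [hm, MultilinearMap.map_piecewise_smul, Finset.prod_const]

variable [DecidableEq ι] [Fintype n]

theorem piKronecker_mul_piKronecker (M M' : ι → Matrix n n R) :
    piKronecker M * piKronecker M' = piKronecker (M * M') := by
  ext f g
  simp only [mul_apply, piKronecker_apply, Pi.mul_apply]
  rw [Fintype.prod_sum fun i j => M i (f i) j * M' i j (g i)]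
  exact Finset.sum_congr rfl fun h _ => Finset.prod_mul_distrib.symm

theorem trace_piKronecker (M : ι → Matrix n n R) :
    (piKronecker M).trace = ∏ i, (M i).trace := by
  simp only [trace, diag, piKronecker_apply]
  exact (Fintype.prod_sum fun i j => M i j j).symm

variable {ρ : Matrix n n R}

theorem trace_piKronecker_update_const (hρ : ρ.trace = 1) (k : ι) (X : Matrix n n R) :
    (piKronecker (update (fun _ => ρ) k X)).trace = X.trace := by
  simp only [trace_piKronecker, apply_update (fun _ => trace), hρ,
    Finset.prod_update_of_mem (Finset.mem_univ k), Finset.prod_const_one, mul_one]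

theorem trace_piKronecker_update_update_const (hρ : ρ.trace = 1) {k l : ι} (hkl : k ≠ l)
    (X Y : Matrix n n R) :
    (piKronecker (update (update (fun _ => ρ) l Y) k X)).trace = X.trace * Y.trace := by
  have hl : l ∈ (Finset.univ : Finset ι) \ {k} := by simpa using hkl.symm
  simp only [trace_piKronecker, apply_update (fun _ => trace), hρ,
    Finset.prod_update_of_mem (Finset.mem_univ k), Finset.prod_update_of_mem hl,
    Finset.prod_const_one, mul_one]

end PiKronecker

section Positivity

open scoped MatrixOrder

variable {m 𝕜 : Type*} [Fintype m] [DecidableEq m] [RCLike 𝕜]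

theorem posSemidef_piKronecker {ι : Type*} [Fintype ι] [DecidableEq ι]
    {M : ι → Matrix m m 𝕜} (hM : ∀ i, (M i).PosSemidef) : (piKronecker M).PosSemidef := by
  choose B hB using fun i => CStarAlgebra.nonneg_iff_eq_star_mul_self.mp (hM i).nonneg
  have : piKronecker M = (piKronecker B)ᴴ * piKronecker B := by
    rw [conjTranspose_piKronecker, piKronecker_mul_piKronecker]
    exact congrArg _ (funext hB)
  rw [this]
  exact posSemidef_conjTranspose_mul_self _

theorem PosSemidef.trace_mul_nonneg {X Y : Matrix m m 𝕜} (hX : X.PosSemidef)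
    (hY : Y.PosSemidef) : 0 ≤ (X * Y).trace := by
  obtain ⟨B, rfl⟩ := CStarAlgebra.nonneg_iff_eq_star_mul_self.mp hY.nonneg
  rw [star_eq_conjTranspose, ← Matrix.mul_assoc, trace_mul_comm, ← Matrix.mul_assoc]
  exact (hX.mul_mul_conjTranspose_same B).trace_nonneg

open scoped Matrix.Norms.L2Operator in
theorem linearMap_ext_posSemidef {M : Type*} [AddCommMonoid M] [Module ℂ M]
    {f g : Matrix m m ℂ →ₗ[ℂ] M} (h : ∀ C : Matrix m m ℂ, C.PosSemidef → f C = g C) : f = g :=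
  LinearMap.ext_on CStarAlgebra.span_nonneg fun C hC => h C (nonneg_iff_posSemidef.mp hC)

end Positivity

section Trace

variable {m ι : Type*} [Fintype m] [Fintype ι]

theorem IsHermitian.im_trace_mul_eq_zero {X Y : Matrix m m ℂ} (hX : X.IsHermitian)
    (hY : Y.IsHermitian) : (X * Y).trace.im = 0 := by
  have h := trace_conjTranspose (X * Y)
  rw [conjTranspose_mul, hX.eq, hY.eq, trace_mul_comm] at h
  exact Complex.conj_eq_iff_im.mp h.symm

theorem trace_sum_smul_mul {R : Type*} [CommSemiring R] (c : ι → R) (P : ι → Matrix m m R)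
    (X : Matrix m m R) : ((∑ i, c i • P i) * X).trace = ∑ i, c i * (P i * X).trace := by
  simp only [Finset.sum_mul, trace_sum, smul_mul, trace_smul, smul_eq_mul]

theorem re_trace_sum_ofReal_smul_mul (c : ι → ℝ) (P : ι → Matrix m m ℂ) (X : Matrix m m ℂ) :
    ((∑ i, (c i : ℂ) • P i) * X).trace.re = ∑ i, c i * (P i * X).trace.re := by
  simp only [trace_sum_smul_mul, Complex.re_sum, Complex.re_ofReal_mul]

end Trace

end Matrix

theorem sum_smul_mul_sum_smul_of_orthogonal {R A ι : Type*} [CommSemiring R] [Semiring A]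
    [Module R A] [IsScalarTower R A A] [SMulCommClass R A A] [Fintype ι] {P : ι → A}
    (hidem : ∀ i, P i * P i = P i) (horth : ∀ i j, i ≠ j → P i * P j = 0) (r : ι → R) :
    (∑ i, r i • P i) * (∑ i, r i • P i) = ∑ i, r i ^ 2 • P i := by
  classical
  simp only [Finset.sum_mul, Finset.mul_sum, smul_mul_smul_comm]
  refine Finset.sum_congr rfl fun i _ => ?_
  rw [Finset.sum_eq_single i (fun j _ hji => by rw [horth j i hji, smul_zero])
    (fun h => absurd (Finset.mem_univ i) h), hidem, sq]

theorem sum_singleton_eq_zero_of_sum_pow_card_eq_zero {ι : Type*} [Fintype ι]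
    (c : Finset ι → ℂ) (h : ∀ t : ℝ, 0 ≤ t → ∑ S, (t : ℂ) ^ S.card * c S = 0) :
    ∑ k, c {k} = 0 := by
  classical
  set p : Polynomial ℂ := ∑ S, Polynomial.C (c S) * Polynomial.X ^ S.card
  have hp : p = 0 := by
    refine Polynomial.eq_zero_of_infinite_isRoot p
      (((Set.Ici_infinite (0 : ℝ)).image Complex.ofReal_injective.injOn).mono ?_)
    rintro _ ⟨t, ht, rfl⟩
    simp only [Set.mem_ofPred_eq, Polynomial.IsRoot, p, Polynomial.eval_finsetSum,
      Polynomial.eval_mul, Polynomial.eval_C, Polynomial.eval_pow, Polynomial.eval_X]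
    simpa only [mul_comm] using h t ht
  have hcoeff := congrArg (Polynomial.coeff · 1) hp
  simp only [p, Polynomial.finsetSum_coeff, Polynomial.coeff_C_mul_X_pow,
    Polynomial.coeff_zero] at hcoeff
  rwa [← Finset.sum_filter, Finset.filter_congr fun _ _ => eq_comm, ← Finset.powerset_univ,
    ← Finset.powersetCard_eq_filter, Finset.powersetCard_one, Finset.sum_map] at hcoeff

section FirstOrder

variable {ι n : Type*} [Fintype ι] [DecidableEq ι] [Fintype n] {D : Matrix (ι → n) (ι → n) ℂ}

theorem trace_mul_piKronecker_const_eq_zero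
    (hD : ∀ σ : Matrix n n ℂ, σ.PosSemidef → σ.trace = 1 →
      (D * piKronecker fun _ : ι => σ).trace = 0)
    {σ : Matrix n n ℂ} (hσ : σ.PosSemidef) (hσ0 : σ.trace ≠ 0) :
    (D * piKronecker fun _ : ι => σ).trace = 0 := by
  have hinv : 0 ≤ σ.trace⁻¹ := inv_nonneg.mpr hσ.trace_nonneg
  have hscale := MultilinearMap.map_smul_univ piKronecker (fun _ : ι => σ.trace)
    (fun _ => σ.trace⁻¹ • σ)
  simp only [smul_smul, mul_inv_cancel₀ hσ0, one_smul] at hscale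
  rw [hscale, Matrix.mul_smul, trace_smul, hD _ (hσ.smul hinv)
    (by rw [trace_smul, smul_eq_mul, inv_mul_cancel₀ hσ0]), smul_zero]

/-- The left side is the coefficient of `t` in `Tr[D (ρ + tC)^{⊗ι}]`, which vanishes for
`t ≥ 0` when `C` is positive; positive matrices span all matrices. -/
theorem sum_trace_mul_piKronecker_update_eq_zero [DecidableEq n]
    (hD : ∀ σ : Matrix n n ℂ, σ.PosSemidef → σ.trace = 1 →
      (D * piKronecker fun _ : ι => σ).trace = 0)
    {ρ : Matrix n n ℂ} (hρ : ρ.PosSemidef) (hρ1 : ρ.trace = 1) (C : Matrix n n ℂ) :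
    ∑ k, (D * piKronecker (update (fun _ => ρ) k C)).trace = 0 := by
  let L : Matrix n n ℂ →ₗ[ℂ] ℂ := ∑ k, traceLinearMap (ι → n) ℂ ℂ ∘ₗ LinearMap.mulLeft ℂ D ∘ₗ
    (piKronecker : MultilinearMap ℂ (fun _ : ι => Matrix n n ℂ) _).toLinearMap (fun _ => ρ) k
  suffices L = 0 by simpa [L] using LinearMap.congr_fun this C
  refine linearMap_ext_posSemidef fun X hX => ?_
  simp only [L, LinearMap.zero_apply, LinearMap.sum_apply, LinearMap.comp_apply,
    MultilinearMap.toLinearMap_apply, LinearMap.mulLeft_apply, traceLinearMap_apply,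
    ← Finset.piecewise_singleton (fun _ => X)]
  refine sum_singleton_eq_zero_of_sum_pow_card_eq_zero
    (fun S => (D * piKronecker (S.piecewise (fun _ => X) fun _ => ρ)).trace) fun t ht => ?_
  have ht' : (0 : ℂ) ≤ t := Complex.zero_le_real.mpr ht
  have htr : ((t : ℂ) • X + ρ).trace ≠ 0 := by
    rw [trace_add, trace_smul, hρ1, smul_eq_mul]
    exact (add_pos_of_nonneg_of_pos (mul_nonneg ht' hX.trace_nonneg) zero_lt_one).ne'
  have h := trace_mul_piKronecker_const_eq_zero hD ((hX.smul ht').add hρ) htr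
  simpa only [piKronecker_const_smul_add, Finset.mul_sum, Matrix.mul_smul, trace_sum, trace_smul,
    smul_eq_mul] using h

end FirstOrder

section Variance

variable {m κ : Type*} [Fintype m] [DecidableEq m] [Fintype κ]

theorem sum_smul_one_sub_mul_mul_smul_one_sub {Q : κ → Matrix m m ℂ} (hQ1 : ∑ i, Q i = 1)
    (s : κ → ℂ) (Θ : Matrix m m ℂ) :
    ∑ i, (s i • 1 - Θ) * Q i * (s i • 1 - Θ) =
      ∑ i, s i ^ 2 • Q i - (∑ i, s i • Q i) * Θ - Θ * (∑ i, s i • Q i) + Θ * Θ := by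
  have hterm : ∀ i, (s i • 1 - Θ) * Q i * (s i • 1 - Θ) =
      s i ^ 2 • Q i - s i • Q i * Θ - Θ * s i • Q i + Θ * Q i * Θ := by
    intro i
    simp only [sub_mul, mul_sub, Matrix.smul_mul, Matrix.mul_smul, Matrix.one_mul,
      Matrix.mul_one, smul_smul, sq]
    abel
  rw [Finset.sum_congr rfl fun i _ => hterm i, Finset.sum_add_distrib, Finset.sum_sub_distrib,
    Finset.sum_sub_distrib]
  simp only [← Finset.sum_mul, ← Finset.mul_sum, hQ1, Matrix.mul_one]

theorem re_trace_mul_mul_le_sum {Q : κ → Matrix m m ℂ} (hQ : ∀ i, (Q i).PosSemidef)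
    (hQ1 : ∑ i, Q i = 1) (s : κ → ℝ) {Θ τ : Matrix m m ℂ} (hΘ : Θ.IsHermitian)
    (hτ : τ.PosSemidef)
    (h₁ : ((∑ i, (s i : ℂ) • Q i - Θ) * (Θ * τ)).trace = 0)
    (h₂ : ((∑ i, (s i : ℂ) • Q i - Θ) * (τ * Θ)).trace = 0) :
    (Θ * (Θ * τ)).trace.re ≤ ∑ i, s i ^ 2 * (Q i * τ).trace.re := by
  set E := ∑ i, (s i : ℂ) • Q i
  have hpsd : (∑ i, ((s i : ℂ) • 1 - Θ) * Q i * ((s i : ℂ) • 1 - Θ)).PosSemidef := by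
    refine posSemidef_sum _ fun i _ => ?_
    have hM : ((s i : ℂ) • 1 - Θ)ᴴ = (s i : ℂ) • 1 - Θ := by
      rw [conjTranspose_sub, conjTranspose_smul, conjTranspose_one, hΘ.eq, Complex.star_def,
        Complex.conj_ofReal]
    have h := (hQ i).mul_mul_conjTranspose_same ((s i : ℂ) • 1 - Θ)
    rwa [hM] at h
  have hEΘ : (E * Θ * τ).trace = (Θ * (Θ * τ)).trace := by
    rw [sub_mul, trace_sub, sub_eq_zero] at h₁
    rw [Matrix.mul_assoc, h₁]
  have hΘE : (Θ * E * τ).trace = (Θ * (Θ * τ)).trace := by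
    rw [sub_mul, trace_sub, sub_eq_zero] at h₂
    rw [Matrix.mul_assoc, trace_mul_comm, Matrix.mul_assoc, h₂, ← Matrix.mul_assoc,
      trace_mul_comm]
  have hsum : ∑ i, (s i : ℂ) ^ 2 * (Q i * τ).trace =
      ((∑ i, ((s i : ℂ) • 1 - Θ) * Q i * ((s i : ℂ) • 1 - Θ)) * τ).trace +
        (Θ * (Θ * τ)).trace := by
    rw [sum_smul_one_sub_mul_mul_smul_one_sub hQ1, add_mul, sub_mul, sub_mul, trace_add,
      trace_sub, trace_sub, hEΘ, hΘE, trace_sum_smul_mul, Matrix.mul_assoc Θ Θ]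
    ring
  have hre := congrArg Complex.re hsum
  simp only [Complex.re_sum, ← Complex.ofReal_pow, Complex.re_ofReal_mul, Complex.add_re] at hre
  linarith [(Complex.nonneg_iff.mp (hpsd.trace_mul_nonneg hτ)).1]

end Variance

section Sites

variable {d N : ℕ}

theorem tensorPow_eq_piKronecker (ρ : Matrix (Fin d) (Fin d) ℂ) :
    (tensorPow ρ : Matrix (Fin N → Fin d) (Fin N → Fin d) ℂ) = piKronecker fun _ => ρ := rfl

theorem siteOp_eq_piKronecker (k : Fin N) (A : Matrix (Fin d) (Fin d) ℂ) :
    siteOp k A = piKronecker (update 1 k A) := by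
  ext f g
  simp only [siteOp, of_apply, piKronecker_apply,
    apply_update (fun i (Mi : Matrix (Fin d) (Fin d) ℂ) => Mi (f i) (g i)),
    Finset.prod_update_of_mem (Finset.mem_univ k), Finset.sdiff_singleton_eq_erase, Pi.one_apply,
    one_apply]

theorem siteOp_mul_piKronecker (k : Fin N) (A : Matrix (Fin d) (Fin d) ℂ)
    (M : Fin N → Matrix (Fin d) (Fin d) ℂ) :
    siteOp k A * piKronecker M = piKronecker (update M k (A * M k)) := by
  rw [siteOp_eq_piKronecker, piKronecker_mul_piKronecker]
  congr 1
  ext1 i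
  rcases eq_or_ne i k with rfl | hik <;> simp [*]

theorem piKronecker_mul_siteOp (k : Fin N) (A : Matrix (Fin d) (Fin d) ℂ)
    (M : Fin N → Matrix (Fin d) (Fin d) ℂ) :
    piKronecker M * siteOp k A = piKronecker (update M k (M k * A)) := by
  rw [siteOp_eq_piKronecker, piKronecker_mul_piKronecker]
  congr 1
  ext1 i
  rcases eq_or_ne i k with rfl | hik <;> simp [*]

theorem isHermitian_siteOp {A : Matrix (Fin d) (Fin d) ℂ} (hA : A.IsHermitian) (k : Fin N) :
    (siteOp k A).IsHermitian := by
  rw [IsHermitian, siteOp_eq_piKronecker, conjTranspose_piKronecker]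
  congr 1
  ext1 i
  rcases eq_or_ne i k with rfl | hik <;> simp [*, hA.eq]

variable {ρ : Matrix (Fin d) (Fin d) ℂ}

theorem trace_siteOp_mul_tensorPow (hρ : ρ.trace = 1) (k : Fin N)
    (A : Matrix (Fin d) (Fin d) ℂ) : (siteOp k A * tensorPow ρ).trace = (A * ρ).trace := by
  rw [tensorPow_eq_piKronecker, siteOp_mul_piKronecker, trace_piKronecker_update_const hρ]

theorem trace_siteOp_mul_siteOp_mul_tensorPow (hρ : ρ.trace = 1) (k l : Fin N)
    (A B : Matrix (Fin d) (Fin d) ℂ) :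
    (siteOp k A * (siteOp l B * tensorPow ρ)).trace =
      if k = l then (A * (B * ρ)).trace else (A * ρ).trace * (B * ρ).trace := by
  rw [tensorPow_eq_piKronecker, siteOp_mul_piKronecker, siteOp_mul_piKronecker]
  split_ifs with hkl
  · subst hkl
    rw [update_self, update_idem, trace_piKronecker_update_const hρ]
  · rw [update_of_ne hkl, trace_piKronecker_update_update_const hρ hkl]

noncomputable def sampleMean (N : ℕ) (A : Matrix (Fin d) (Fin d) ℂ) :
    Matrix (Fin N → Fin d) (Fin N → Fin d) ℂ :=
  (N : ℂ)⁻¹ • ∑ k : Fin N, siteOp k A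

theorem isHermitian_sampleMean {A : Matrix (Fin d) (Fin d) ℂ} (hA : A.IsHermitian) :
    (sampleMean N A).IsHermitian :=
  (isSelfAdjoint_sum _ fun k _ => (isHermitian_siteOp hA k).isSelfAdjoint).isHermitian.smul
    (IsSelfAdjoint.natCast N).inv₀

theorem sampleMean_mul_tensorPow (A : Matrix (Fin d) (Fin d) ℂ) :
    sampleMean N A * tensorPow ρ =
      (N : ℂ)⁻¹ • ∑ k, piKronecker (update (fun _ => ρ) k (A * ρ)) := by
  simp only [sampleMean, smul_mul, Finset.sum_mul, tensorPow_eq_piKronecker,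
    siteOp_mul_piKronecker]

theorem tensorPow_mul_sampleMean (A : Matrix (Fin d) (Fin d) ℂ) :
    tensorPow ρ * sampleMean N A =
      (N : ℂ)⁻¹ • ∑ k, piKronecker (update (fun _ => ρ) k (ρ * A)) := by
  simp only [sampleMean, Matrix.mul_smul, Finset.mul_sum, tensorPow_eq_piKronecker,
    piKronecker_mul_siteOp]

theorem trace_sampleMean_mul_tensorPow (hN : N ≠ 0) (hρ : ρ.trace = 1)
    (A : Matrix (Fin d) (Fin d) ℂ) :
    (sampleMean N A * tensorPow ρ).trace = (A * ρ).trace := by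
  simp only [sampleMean, smul_mul, Finset.sum_mul, trace_smul, trace_sum,
    trace_siteOp_mul_tensorPow hρ, Finset.sum_const, Finset.card_univ, Fintype.card_fin,
    nsmul_eq_mul, smul_eq_mul]
  field_simp

theorem trace_sampleMean_mul_sampleMean_mul_tensorPow (hN : N ≠ 0) (hρ : ρ.trace = 1)
    (A : Matrix (Fin d) (Fin d) ℂ) :
    (sampleMean N A * (sampleMean N A * tensorPow ρ)).trace =
      (A * ρ).trace ^ 2 + ((A * (A * ρ)).trace - (A * ρ).trace ^ 2) / N := by
  have hsplit : ∀ k l : Fin N,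
      (if k = l then (A * (A * ρ)).trace else (A * ρ).trace * (A * ρ).trace) =
        (if k = l then (A * (A * ρ)).trace - (A * ρ).trace ^ 2 else 0) + (A * ρ).trace ^ 2 := by
    intro k l
    split_ifs <;> ring
  simp only [sampleMean, smul_mul, Matrix.mul_smul, Finset.sum_mul, Finset.mul_sum, trace_smul,
    trace_sum, smul_eq_mul, trace_siteOp_mul_siteOp_mul_tensorPow hρ, hsplit,
    Finset.sum_add_distrib, Finset.sum_ite_eq', Finset.mem_univ, if_true, Finset.sum_const,
    Finset.card_univ, Fintype.card_fin, nsmul_eq_mul]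
  field_simp
  ring

theorem re_trace_sampleMean_mul_sampleMean_mul_tensorPow (hN : N ≠ 0)
    {A : Matrix (Fin d) (Fin d) ℂ} (hA : A.IsHermitian) (hρ : ρ.IsHermitian)
    (hρ1 : ρ.trace = 1) :
    (sampleMean N A * (sampleMean N A * tensorPow ρ)).trace.re - (A * ρ).trace.re ^ 2 =
      ((A * A * ρ).trace.re - (A * ρ).trace.re ^ 2) / N := by
  have hx : ((A * ρ).trace.re : ℂ) = (A * ρ).trace :=
    Complex.ext rfl (hA.im_trace_mul_eq_zero hρ).symm
  have hAA : (A * A).IsHermitian := by simpa only [sq] using hA.pow 2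
  have hy : ((A * A * ρ).trace.re : ℂ) = (A * A * ρ).trace :=
    Complex.ext rfl (hAA.im_trace_mul_eq_zero hρ).symm
  rw [trace_sampleMean_mul_sampleMean_mul_tensorPow hN hρ1, ← Matrix.mul_assoc, ← hx, ← hy]
  norm_cast
  ring

variable {D : Matrix (Fin N → Fin d) (Fin N → Fin d) ℂ}

theorem trace_mul_sampleMean_mul_tensorPow_eq_zero
    (hD : ∀ σ : Matrix (Fin d) (Fin d) ℂ, σ.PosSemidef → σ.trace = 1 →
      (D * tensorPow σ).trace = 0)
    (hρ : ρ.PosSemidef) (hρ1 : ρ.trace = 1) (A : Matrix (Fin d) (Fin d) ℂ) :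
    (D * (sampleMean N A * tensorPow ρ)).trace = 0 := by
  rw [sampleMean_mul_tensorPow, Matrix.mul_smul, trace_smul, Finset.mul_sum, trace_sum,
    sum_trace_mul_piKronecker_update_eq_zero hD hρ hρ1, smul_zero]

theorem trace_mul_tensorPow_mul_sampleMean_eq_zero
    (hD : ∀ σ : Matrix (Fin d) (Fin d) ℂ, σ.PosSemidef → σ.trace = 1 →
      (D * tensorPow σ).trace = 0)
    (hρ : ρ.PosSemidef) (hρ1 : ρ.trace = 1) (A : Matrix (Fin d) (Fin d) ℂ) :
    (D * (tensorPow ρ * sampleMean N A)).trace = 0 := by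
  rw [tensorPow_mul_sampleMean, Matrix.mul_smul, trace_smul, Finset.mul_sum, trace_sum,
    sum_trace_mul_piKronecker_update_eq_zero hD hρ hρ1, smul_zero]

end Sites

theorem spectral_measurement_of_theta_optimal_general
    {d N : ℕ} (hN : 0 < N)
    (A : Matrix (Fin d) (Fin d) ℂ) (hA : A.IsHermitian)
    {ι : Type} [Fintype ι]
    (P : ι → Matrix (Fin N → Fin d) (Fin N → Fin d) ℂ) (r : ι → ℝ)
    (hproj : ∀ i, (P i).IsHermitian ∧ P i * P i = P i)
    (horth : ∀ i j, i ≠ j → P i * P j = 0)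
    (hspec : ((N : ℂ)⁻¹ • ∑ k : Fin N, siteOp k A) = ∑ i, (r i : ℂ) • P i) :
    (∀ ρ : Matrix (Fin d) (Fin d) ℂ, IsDensity ρ →
      ∑ i, (r i : ℂ) * (P i * tensorPow ρ).trace = (A * ρ).trace) ∧
    (∀ ρ : Matrix (Fin d) (Fin d) ℂ, IsDensity ρ →
      (∑ i, (r i) ^ 2 * ((P i * tensorPow ρ).trace).re) - (((A * ρ).trace).re) ^ 2 =
        (((A * A * ρ).trace).re - (((A * ρ).trace).re) ^ 2) / N) ∧
    (∀ (κ : Type) (_ : Fintype κ)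
        (Q : κ → Matrix (Fin N → Fin d) (Fin N → Fin d) ℂ) (s : κ → ℝ),
      (∀ i, (Q i).PosSemidef) → (∑ i, Q i = 1) →
      (∀ ρ : Matrix (Fin d) (Fin d) ℂ, IsDensity ρ →
        ∑ i, (s i : ℂ) * (Q i * tensorPow ρ).trace = (A * ρ).trace) →
      ∀ ρ : Matrix (Fin d) (Fin d) ℂ, IsDensity ρ →
        (∑ i, (s i) ^ 2 * ((Q i * tensorPow ρ).trace).re) - (((A * ρ).trace).re) ^ 2 ≥
          (∑ i, (r i) ^ 2 * ((P i * tensorPow ρ).trace).re) - (((A * ρ).trace).re) ^ 2) := by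
  set Θ := sampleMean N A
  have hΘ : Θ = ∑ i, (r i : ℂ) • P i := hspec
  have hsecond : ∀ X, ∑ i, r i ^ 2 * (P i * X).trace.re = (Θ * (Θ * X)).trace.re := fun X => by
    rw [← Matrix.mul_assoc, hΘ, sum_smul_mul_sum_smul_of_orthogonal (fun i => (hproj i).2) horth,
      ← re_trace_sum_ofReal_smul_mul]
    push_cast
    rfl
  refine ⟨fun ρ hρ => ?_, fun ρ hρ => ?_, fun κ _ Q s hQ hQ1 hunbiased ρ hρ => ?_⟩
  · rw [← trace_sum_smul_mul, ← hΘ, trace_sampleMean_mul_tensorPow hN.ne' hρ.2]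
  · rw [hsecond]
    exact re_trace_sampleMean_mul_sampleMean_mul_tensorPow hN.ne' hA hρ.1.isHermitian hρ.2
  · have hD : ∀ σ : Matrix (Fin d) (Fin d) ℂ, σ.PosSemidef → σ.trace = 1 →
        ((∑ i, (s i : ℂ) • Q i - Θ) * tensorPow σ).trace = 0 := fun σ hσ hσ1 => by
      rw [sub_mul, trace_sub, trace_sum_smul_mul, hunbiased σ ⟨hσ, hσ1⟩,
        trace_sampleMean_mul_tensorPow hN.ne' hσ1, sub_self]
    refine sub_le_sub_right ?_ _
    rw [hsecond]
    exact re_trace_mul_mul_le_sum hQ hQ1 s (isHermitian_sampleMean hA)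
      (posSemidef_piKronecker fun _ => hρ.1)
      (trace_mul_sampleMean_mul_tensorPow_eq_zero hD hρ.1 hρ.2 A)
      (trace_mul_tensorPow_mul_sampleMean_eq_zero hD hρ.1 hρ.2 A)

/-- The spectral measurement of Θ = (1/N)∑_k A^{(k)} (PVM of eigenprojections
with outcomes the eigenvalues) is unbiased for Tr[Aρ] on ρ^{⊗N}, has variance
(Tr[A²ρ] − (Tr[Aρ])²)/N, and achieves the minimum variance among all unbiased POVMs. -/
theorem spectral_measurement_of_theta_optimal
    {d N : ℕ} (hN : 0 < N)
    (A : Matrix (Fin d) (Fin d) ℂ) (hA : A.IsHermitian)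
    {ι : Type} [Fintype ι]
    (P : ι → Matrix (Fin N → Fin d) (Fin N → Fin d) ℂ) (r : ι → ℝ)
    (hproj : ∀ i, (P i).IsHermitian ∧ P i * P i = P i)
    (horth : ∀ i j, i ≠ j → P i * P j = 0)
    (hsum : ∑ i, P i = 1)
    (hspec : ((N : ℂ)⁻¹ • ∑ k : Fin N, siteOp k A) = ∑ i, (r i : ℂ) • P i)
    (hinj : Function.Injective r) :
    (∀ ρ : Matrix (Fin d) (Fin d) ℂ, IsDensity ρ →
      ∑ i, (r i : ℂ) * (P i * tensorPow ρ).trace = (A * ρ).trace) ∧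
    (∀ ρ : Matrix (Fin d) (Fin d) ℂ, IsDensity ρ →
      (∑ i, (r i) ^ 2 * ((P i * tensorPow ρ).trace).re) - (((A * ρ).trace).re) ^ 2 =
        (((A * A * ρ).trace).re - (((A * ρ).trace).re) ^ 2) / N) ∧
    (∀ (κ : Type) (_ : Fintype κ)
        (Q : κ → Matrix (Fin N → Fin d) (Fin N → Fin d) ℂ) (s : κ → ℝ),
      (∀ i, (Q i).PosSemidef) → (∑ i, Q i = 1) →
      (∀ ρ : Matrix (Fin d) (Fin d) ℂ, IsDensity ρ →
        ∑ i, (s i : ℂ) * (Q i * tensorPow ρ).trace = (A * ρ).trace) →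
      ∀ ρ : Matrix (Fin d) (Fin d) ℂ, IsDensity ρ →
        (∑ i, (s i) ^ 2 * ((Q i * tensorPow ρ).trace).re) - (((A * ρ).trace).re) ^ 2 ≥
          (∑ i, (r i) ^ 2 * ((P i * tensorPow ρ).trace).re) - (((A * ρ).trace).re) ^ 2) :=
  spectral_measurement_of_theta_optimal_general hN A hA P r hproj horth hspec
end
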